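/- Let λ > 0, let s ≥ 1 be an integer, let c > 0 be real, and let η ∈ ℂ with |η| < 1. Define the harmonic polynomial p_1(z) = z + conj(η · Σ_{n=0}^s C(s,n) · ((s−n+1)_n/(c)_n) · z^{n+2}/(n+1)), where C(s,n) is the binomial coefficient and (x)_m the Pochhammer symbol. If Γ(c)·Γ(c+2s) < λ·(Γ(c+s))², then p_1 belongs to Ω_H^0(λ). -/

import Mathlib

open Complex

noncomputable section

/-- The open unit disk in the complex plane. -/
def unitDisk : Set ℂ := {z : ℂ | ‖z‖ < 1}

/-- The class `Ω_H^0(λ)` of harmonic mappings `f = h + conj ∘ g`. -/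
def OmegaH0 (lam : ℝ) (h g : ℂ → ℂ) : Prop :=
  AnalyticOnNhd ℂ h unitDisk ∧ AnalyticOnNhd ℂ g unitDisk ∧
    h 0 = 0 ∧ deriv h 0 = 1 ∧ g 0 = 0 ∧ deriv g 0 = 0 ∧
    ∀ z ∈ unitDisk,
      ‖h z - z * deriv h z‖ < lam - ‖g z - z * deriv g z‖

/-- The Pochhammer symbol \`(x)_n = x (x+1) ⋯ (x+n-1)\`. -/
def poch (x : ℝ) (n : ℕ) : ℝ := ∏ k ∈ Finset.range n, (x + k)

/-!
Since `h = id`, the condition reduces to `‖g - z g'‖ < λ` on the disk, and `g - z g'` is the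
polynomial `-η ∑ aₙ z^(n+2)` with nonnegative coefficients `aₙ = C(s,n) (s-n+1)ₙ / (c)ₙ`; so it
suffices that `∑ aₙ < λ`. By Chu–Vandermonde, `∑ aₙ = (c+s)ₛ / (c)ₛ`, and by `Γ(x+n) = (x)ₙ Γ(x)`
this is `Γ(c) Γ(c+2s) / Γ(c+s)²`.
-/

open Finset Polynomial

lemma poch_pos {x : ℝ} (hx : 0 < x) (n : ℕ) : 0 < poch x n :=
  prod_pos fun k _ => by positivity

lemma poch_add (x : ℝ) (a b : ℕ) : poch x (a + b) = poch x a * poch (x + a) b := by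
  simp only [poch, prod_range_add, Nat.cast_add, add_assoc]

lemma poch_eq_eval_ascPochhammer (x : ℝ) (n : ℕ) : poch x n = (ascPochhammer ℝ n).eval x := by
  induction n with
  | zero => simp [poch]
  | succ n ih => simp [poch, prod_range_succ, ascPochhammer_succ_right, ← ih]

lemma poch_eq_smeval_descPochhammer (x : ℝ) (n : ℕ) :
    poch x n = (descPochhammer ℤ n).smeval (x + n - 1) := by
  rw [descPochhammer_smeval_eq_ascPochhammer, ascPochhammer_smeval_eq_eval,
    poch_eq_eval_ascPochhammer]
  ring_nf

/-- Chu–Vandermonde in rising-factorial form: `(x - n + 1)_n` is the falling factorial `x^{(n)}`. -/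
lemma sum_choose_mul_poch_mul_poch (x c : ℝ) (k : ℕ) :
    ∑ n ∈ range (k + 1), (k.choose n : ℝ) * (poch (x - n + 1) n * poch (c + n) (k - n)) =
      poch (x + c) k := by
  rw [poch_eq_smeval_descPochhammer, show x + c + k - 1 = x + (c + k - 1) by ring,
    Ring.descPochhammer_smeval_add k (Commute.all _ _),
    Finset.Nat.sum_antidiagonal_eq_sum_range_succ_mk]
  refine sum_congr rfl fun n hn => ?_
  have hnk : n ≤ k := mem_range_succ_iff.mp hn
  rw [poch_eq_smeval_descPochhammer, poch_eq_smeval_descPochhammer, Nat.cast_sub hnk]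
  ring_nf

lemma sum_choose_mul_poch_div_poch (s : ℕ) {c : ℝ} (hc : 0 < c) :
    ∑ n ∈ range (s + 1), (s.choose n : ℝ) * poch ((s : ℝ) - n + 1) n / poch c n =
      poch (c + s) s / poch c s := by
  rw [eq_div_iff (poch_pos hc s).ne', sum_mul, add_comm c, ← sum_choose_mul_poch_mul_poch]
  refine sum_congr rfl fun n hn => ?_
  rw [← Nat.add_sub_of_le (mem_range_succ_iff.mp hn), poch_add, Nat.add_sub_cancel_left]
  field_simp [(poch_pos hc n).ne']

lemma Gamma_add_nat_eq_poch_mul {x : ℝ} (hx : 0 < x) (n : ℕ) :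
    Real.Gamma (x + n) = poch x n * Real.Gamma x := by
  induction n with
  | zero => simp [poch]
  | succ n ih =>
    rw [Nat.cast_succ, ← add_assoc, Real.Gamma_add_one (by positivity), ih, poch_add,
      show poch (x + n) 1 = x + n by simp [poch]]
    ring

lemma Gamma_mul_Gamma_add_two_mul {c : ℝ} (hc : 0 < c) (s : ℕ) :
    Real.Gamma c * Real.Gamma (c + 2 * s) =
      poch (c + s) s / poch c s * Real.Gamma (c + s) ^ 2 := by
  have h2s : Real.Gamma (c + 2 * s) = poch c s * poch (c + s) s * Real.Gamma c := by
    rw [← poch_add, ← Gamma_add_nat_eq_poch_mul hc]; push_cast; ring_nf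
  rw [h2s, Gamma_add_nat_eq_poch_mul hc]
  field_simp [(poch_pos hc s).ne']

section HarmonicPolynomial

variable (b : ℕ → ℂ) (N : ℕ)

lemma hasDerivAt_sum_mul_pow_div (z : ℂ) :
    HasDerivAt (fun z : ℂ => ∑ n ∈ range N, b n * z ^ (n + 2) / ((n : ℂ) + 1))
      (∑ n ∈ range N, b n * (((n : ℂ) + 2) * z ^ (n + 1)) / ((n : ℂ) + 1)) z := by
  refine HasDerivAt.fun_sum fun n _ => ?_
  refine (((hasDerivAt_pow (n + 2) z).const_mul (b n)).div_const ((n : ℂ) + 1)).congr_deriv ?_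
  push_cast
  ring

/-- `g ↦ g - z g'` multiplies `z ^ (n + 2)` by `-(n + 1)`, cancelling the denominators. -/
lemma mul_sum_mul_pow_div_sub_mul_deriv (η z : ℂ) :
    η * (∑ n ∈ range N, b n * z ^ (n + 2) / ((n : ℂ) + 1)) -
        z * deriv (fun z : ℂ => η * ∑ n ∈ range N, b n * z ^ (n + 2) / ((n : ℂ) + 1)) z =
      -(η * ∑ n ∈ range N, b n * z ^ (n + 2)) := by
  rw [((hasDerivAt_sum_mul_pow_div b N z).const_mul η).deriv, mul_left_comm, ← mul_sub,
    ← mul_neg, mul_sum, ← sum_sub_distrib, ← sum_neg_distrib]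
  refine congrArg _ (sum_congr rfl fun n _ => ?_)
  field_simp [Nat.cast_add_one_ne_zero n]
  ring

lemma omegaH0_id_mul_sum_mul_pow_div {lam : ℝ} (η : ℂ) (h : ‖η‖ * ∑ n ∈ range N, ‖b n‖ < lam) :
    OmegaH0 lam (fun z => z) (fun z => η * ∑ n ∈ range N, b n * z ^ (n + 2) / ((n : ℂ) + 1)) := by
  have hg z := (hasDerivAt_sum_mul_pow_div b N z).const_mul η
  have hdiff : Differentiable ℂ
      (fun z => η * ∑ n ∈ range N, b n * z ^ (n + 2) / ((n : ℂ) + 1)) :=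
    fun z => (hg z).differentiableAt
  have hdisk : IsOpen unitDisk := isOpen_lt continuous_norm continuous_const
  refine ⟨analyticOnNhd_id, hdiff.differentiableOn.analyticOnNhd hdisk, rfl, by simp,
    by simp, by simp [(hg 0).deriv], fun z hz => ?_⟩
  have hz1 : ‖z‖ ≤ 1 := le_of_lt hz
  rw [deriv_id'', mul_one, sub_self, norm_zero, sub_pos, mul_sum_mul_pow_div_sub_mul_deriv,
    norm_neg, norm_mul]
  refine (mul_le_mul_of_nonneg_left ?_ (norm_nonneg η)).trans_lt h
  refine (norm_sum_le _ _).trans (sum_le_sum fun n _ => ?_)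
  rw [norm_mul, norm_pow]
  exact mul_le_of_le_one_right (norm_nonneg _) (pow_le_one₀ (norm_nonneg z) hz1)

end HarmonicPolynomial

theorem stmt17_general (lam : ℝ) (s : ℕ) (c : ℝ) (hc : 0 < c)
    (η : ℂ) (hη : ‖η‖ < 1)
    (hcond : Real.Gamma c * Real.Gamma (c + 2 * s) < lam * Real.Gamma (c + s) ^ 2) :
    OmegaH0 lam (fun z => z)
      (fun z => η * ∑ n ∈ Finset.range (s + 1),
        (((s.choose n : ℝ) * poch ((s : ℝ) - n + 1) n / poch c n : ℝ) : ℂ) *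
          z ^ (n + 2) / ((n : ℂ) + 1)) := by
  set a : ℕ → ℝ := fun n => (s.choose n : ℝ) * poch ((s : ℝ) - n + 1) n / poch c n
  have ha : ∀ n ∈ range (s + 1), 0 ≤ a n := fun n hn => by
    have hns : (n : ℝ) ≤ s := by exact_mod_cast mem_range_succ_iff.mp hn
    have := poch_pos (x := (s : ℝ) - n + 1) (by linarith) n
    have := poch_pos hc n
    positivity
  have hsum : ∑ n ∈ range (s + 1), a n < lam := by
    rw [sum_choose_mul_poch_div_poch s hc]
    rw [Gamma_mul_Gamma_add_two_mul hc] at hcond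
    exact lt_of_mul_lt_mul_right hcond (sq_nonneg _)
  refine omegaH0_id_mul_sum_mul_pow_div (fun n => (a n : ℂ)) _ η ?_
  calc ‖η‖ * ∑ n ∈ range (s + 1), ‖(a n : ℂ)‖ = ‖η‖ * ∑ n ∈ range (s + 1), a n := by
        rw [sum_congr rfl fun n hn => by rw [norm_real, Real.norm_of_nonneg (ha n hn)]]
    _ ≤ ∑ n ∈ range (s + 1), a n := mul_le_of_le_one_left (sum_nonneg ha) hη.le
    _ < lam := hsum

theorem stmt17 (lam : ℝ) (hlam : 0 < lam) (s : ℕ) (hs : 1 ≤ s) (c : ℝ) (hc : 0 < c)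
    (η : ℂ) (hη : ‖η‖ < 1)
    (hcond : Real.Gamma c * Real.Gamma (c + 2 * s) < lam * Real.Gamma (c + s) ^ 2) :
    OmegaH0 lam (fun z => z)
      (fun z => η * ∑ n ∈ Finset.range (s + 1),
        (((s.choose n : ℝ) * poch ((s : ℝ) - n + 1) n / poch c n : ℝ) : ℂ) *
          z ^ (n + 2) / ((n : ℂ) + 1)) :=
  stmt17_general lam s c hc η hη hcond
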